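/- arXiv:1812.02015 — 2 statements merged into one kernel-verified Lean document; each statement's English description precedes it below -/
import Mathlib

section
/- The Hausdorff dimension of the middle-thirds Cantor set is log 2 / log 3. -/
/-!
Upper bound: the `2ⁿ` level-`n` cylinders of the Cantor set have diameter `3⁻ⁿ`, so every
such cover has `(log 2 / log 3)`-dimensional mass `2ⁿ (3⁻ⁿ) ^ (log 2 / log 3) = 1`.

Lower bound: the Cantor function `0.(2y₀)(2y₁)…₃ ↦ 0.y₀y₁…₂` maps the Cantor set onto
`[0, 1]` and is Hölder of exponent `log 2 / log 3`. If `y` and `y'` first differ at digit `n`,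
the ternary values are at least `3⁻⁽ⁿ⁺¹⁾` apart (only digits `0` and `2` occur), while the
binary values are at most `2⁻ⁿ` apart. A Hölder map of exponent `r` multiplies dimension by at
most `1 / r`.
-/

open Set Filter Real Function MeasureTheory
open scoped NNReal ENNReal

theorem dimH_range_le_of_edist_le {α X Y : Type*} [Nonempty α] [EMetricSpace X]
    [EMetricSpace Y] {f : α → X} {g : α → Y} {C r : ℝ≥0} (hr : 0 < r)
    (h : ∀ a b, edist (g a) (g b) ≤ C * edist (f a) (f b) ^ (r : ℝ)) :
    dimH (range g) ≤ dimH (range f) / r := by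
  -- `h` makes `g` constant on the fibres of `f`, so `g` factors through `range f`.
  have hg : ∀ a, g (invFun f (f a)) = g a := fun a ↦ by
    have := h (invFun f (f a)) a
    rwa [invFun_eq (f := f) ⟨a, rfl⟩, edist_self, ENNReal.zero_rpow_of_pos (mod_cast hr),
      mul_zero, nonpos_iff_eq_zero, edist_eq_zero] at this
  have hholder : HolderOnWith C r (g ∘ invFun f) (range f) := by
    rintro _ ⟨a, rfl⟩ _ ⟨b, rfl⟩
    simpa only [comp_apply, hg] using h a b
  have hrange : range g = (g ∘ invFun f) '' range f := by
    rw [← range_comp, comp_assoc]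
    exact congrArg range (funext fun a ↦ (hg a).symm)
  rw [hrange]
  exact hholder.dimH_image_le hr

theorem ofDigits_eq_head_add_ofDigits_tail {b : ℕ} (z : ℕ → Fin b) :
    ofDigits z = (z 0 + ofDigits fun i ↦ z (i + 1)) / b := by
  rw [ofDigits_eq_sum_add_ofDigits z 1]
  simp only [Finset.range_one, Finset.sum_singleton, ofDigitsTerm, zero_add, pow_one]
  ring

theorem inv_pow_succ_le_ofDigits_sub {b : ℕ} {x y : ℕ → Fin b} {n : ℕ}
    (hxy : ∀ i < n, x i = y i) (hn : (x n : ℕ) + 2 ≤ y n) :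
    ((b : ℝ) ^ (n + 1))⁻¹ ≤ ofDigits y - ofDigits x := by
  have hb : (0 : ℝ) < b := by exact_mod_cast Fin.pos (x 0)
  have hsum : ∑ i ∈ Finset.range n, ofDigitsTerm x i = ∑ i ∈ Finset.range n, ofDigitsTerm y i :=
    Finset.sum_congr rfl fun i hi ↦ by simp [ofDigitsTerm, hxy i (Finset.mem_range.mp hi)]
  have hgap : (b : ℝ)⁻¹ ≤ (ofDigits fun i ↦ y (i + n)) - ofDigits fun i ↦ x (i + n) := by
    rw [inv_eq_one_div, ofDigits_eq_head_add_ofDigits_tail (fun i ↦ y (i + n)),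
      ofDigits_eq_head_add_ofDigits_tail (fun i ↦ x (i + n)), ← sub_div]
    have hn' : (x n : ℝ) + 2 ≤ y n := by exact_mod_cast hn
    gcongr
    simp only [zero_add]
    linarith [ofDigits_nonneg fun i ↦ y (i + 1 + n), ofDigits_le_one fun i ↦ x (i + 1 + n)]
  rw [ofDigits_eq_sum_add_ofDigits x n, ofDigits_eq_sum_add_ofDigits y n, hsum,
    add_sub_add_left_eq_sub, ← mul_sub, pow_succ, mul_inv]
  exact mul_le_mul_of_nonneg_left hgap (by positivity)

noncomputable def cantorCoding (y : ℕ → Bool) : ℝ :=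
  ofDigits fun i ↦ cond (y i) (2 : Fin 3) 0

noncomputable def binaryCoding (y : ℕ → Bool) : ℝ :=
  ofDigits fun i ↦ cond (y i) (1 : Fin 2) 0

theorem range_cantorCoding : range cantorCoding = cantorSet := by
  refine (range_subset_iff.2 ofDigits_bool_to_fin_three_mem_cantorSet).antisymm fun x hx ↦ ?_
  exact ⟨cantorSetEquivNatToBool ⟨x, hx⟩,
    congrArg Subtype.val (cantorSetEquivNatToBool.symm_apply_apply ⟨x, hx⟩)⟩

theorem range_binaryCoding : range binaryCoding = Icc 0 1 := by
  refine (range_subset_iff.2 fun _ ↦ mem_Icc.2 ⟨ofDigits_nonneg _, ofDigits_le_one _⟩).antisymm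
    fun x hx ↦ ?_
  obtain ⟨a, -, rfl⟩ := ofDigits_SurjOn (b := 2) one_lt_two hx
  refine ⟨fun i ↦ a i = 1, congrArg ofDigits (funext fun i ↦ ?_)⟩
  show cond (decide (a i = 1)) 1 0 = a i
  generalize a i = d
  fin_cases d <;> rfl

theorem abs_cantorCoding_sub_le {x y : ℕ → Bool} {n : ℕ} (hxy : ∀ i < n, x i = y i) :
    |cantorCoding x - cantorCoding y| ≤ ((3 : ℝ) ^ n)⁻¹ := by
  simpa [cantorCoding] using abs_ofDigits_sub_ofDigits_le (b := 3) fun i hi ↦ by rw [hxy i hi]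

theorem abs_binaryCoding_sub_le {x y : ℕ → Bool} {n : ℕ} (hxy : ∀ i < n, x i = y i) :
    |binaryCoding x - binaryCoding y| ≤ ((2 : ℝ) ^ n)⁻¹ := by
  simpa [binaryCoding] using abs_ofDigits_sub_ofDigits_le (b := 2) fun i hi ↦ by rw [hxy i hi]

theorem inv_three_pow_rpow_logb (n : ℕ) : ((3 : ℝ) ^ n)⁻¹ ^ logb 3 2 = ((2 : ℝ) ^ n)⁻¹ := by
  rw [inv_rpow (by positivity), ← rpow_natCast, ← rpow_mul (by norm_num), mul_comm,
    rpow_mul (by norm_num), rpow_logb (by norm_num) (by norm_num) (by norm_num), rpow_natCast]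

theorem logb_three_two_pos : 0 < logb 3 2 := logb_pos (by norm_num) (by norm_num)

theorem hausdorffMeasure_cantorSet_le_one : μH[logb 3 2] cantorSet ≤ 1 := by
  let cylinder (n : ℕ) (c : Fin n → Bool) : Set ℝ :=
    cantorCoding '' {y | ∀ i : Fin n, y i = c i}
  have hcover (n : ℕ) : cantorSet ⊆ ⋃ c, cylinder n c := by
    rw [← range_cantorCoding]
    rintro _ ⟨y, rfl⟩
    exact mem_iUnion.2 ⟨fun i ↦ y i, y, fun _ ↦ rfl, rfl⟩
  have hdiam (n : ℕ) (c : Fin n → Bool) :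
      Metric.ediam (cylinder n c) ≤ ENNReal.ofReal ((3 : ℝ) ^ n)⁻¹ := by
    refine Metric.ediam_image_le_iff.2 fun x hx y hy ↦ ?_
    rw [edist_dist, Real.dist_eq]
    refine ENNReal.ofReal_le_ofReal (abs_cantorCoding_sub_le fun i hi ↦ ?_)
    rw [hx ⟨i, hi⟩, hy ⟨i, hi⟩]
  have hsum (n : ℕ) : ∑ c, Metric.ediam (cylinder n c) ^ logb 3 2 ≤ 1 := calc
    ∑ c, Metric.ediam (cylinder n c) ^ logb 3 2
        ≤ ∑ _ : Fin n → Bool, ENNReal.ofReal ((3 : ℝ) ^ n)⁻¹ ^ logb 3 2 :=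
      Finset.sum_le_sum fun c _ ↦ ENNReal.rpow_le_rpow (hdiam n c) logb_three_two_pos.le
    _ = 2 ^ n * ENNReal.ofReal ((2 : ℝ) ^ n)⁻¹ := by
      rw [Finset.sum_const, Finset.card_univ, nsmul_eq_mul,
        ENNReal.ofReal_rpow_of_nonneg (by positivity) logb_three_two_pos.le,
        inv_three_pow_rpow_logb]
      simp
    _ = 1 := by
      rw [ENNReal.ofReal_inv_of_pos (by positivity), ENNReal.ofReal_pow zero_le_two,
        ENNReal.ofReal_ofNat, ENNReal.mul_inv_cancel (by simp) (by simp)]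
  have hr : Tendsto (fun n : ℕ ↦ ENNReal.ofReal ((3 : ℝ) ^ n)⁻¹) atTop (nhds 0) := by
    simpa using ENNReal.tendsto_ofReal
      (tendsto_inv_atTop_zero.comp (tendsto_pow_atTop_atTop_of_one_lt (by norm_num : (1 : ℝ) < 3)))
  calc μH[logb 3 2] cantorSet
        ≤ liminf (fun n ↦ ∑ c, Metric.ediam (cylinder n c) ^ logb 3 2) atTop :=
      Measure.hausdorffMeasure_le_liminf_sum _ _ _ hr cylinder (.of_forall hdiam)
        (.of_forall hcover)
    _ ≤ 1 := liminf_le_of_frequently_le' (.of_forall hsum)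

theorem dimH_cantorSet_le_logb : dimH cantorSet ≤ ENNReal.ofReal (logb 3 2) := by
  refine dimH_le_of_hausdorffMeasure_ne_top ?_
  rw [Real.coe_toNNReal _ logb_three_two_pos.le]
  exact ne_top_of_le_ne_top ENNReal.one_ne_top hausdorffMeasure_cantorSet_le_one

theorem inv_pow_succ_le_abs_cantorCoding_sub {x y : ℕ → Bool} {n : ℕ}
    (hxy : ∀ i < n, x i = y i) (hn : x n ≠ y n) :
    ((3 : ℝ) ^ (n + 1))⁻¹ ≤ |cantorCoding x - cantorCoding y| := by
  wlog hx : x n = false generalizing x y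
  · rw [abs_sub_comm]
    exact this (fun i hi ↦ (hxy i hi).symm) hn.symm (by simpa [hx] using hn.symm)
  have hy : y n = true := by simpa [hx] using hn.symm
  rw [abs_sub_comm]
  refine (inv_pow_succ_le_ofDigits_sub (fun i hi ↦ by simp [hxy i hi]) ?_).trans (le_abs_self _)
  simp [hx, hy]

theorem abs_binaryCoding_sub_le_rpow (x y : ℕ → Bool) :
    |binaryCoding x - binaryCoding y| ≤ 2 * |cantorCoding x - cantorCoding y| ^ logb 3 2 := by
  obtain rfl | hne := eq_or_ne x y
  · simp [zero_rpow logb_three_two_pos.ne']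
  classical
  have hex : ∃ n, x n ≠ y n := Function.ne_iff.mp hne
  set n := Nat.find hex
  have hxy : ∀ i < n, x i = y i := fun i hi ↦ not_not.mp (Nat.find_min hex hi)
  calc |binaryCoding x - binaryCoding y| ≤ ((2 : ℝ) ^ n)⁻¹ := abs_binaryCoding_sub_le hxy
    _ = 2 * ((3 : ℝ) ^ (n + 1))⁻¹ ^ logb 3 2 := by
      rw [inv_three_pow_rpow_logb, pow_succ]
      ring
    _ ≤ 2 * |cantorCoding x - cantorCoding y| ^ logb 3 2 := by
      gcongr
      · exact logb_three_two_pos.le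
      · exact inv_pow_succ_le_abs_cantorCoding_sub hxy (Nat.find_spec hex)

theorem edist_binaryCoding_le (x y : ℕ → Bool) :
    edist (binaryCoding x) (binaryCoding y) ≤
      (2 : ℝ≥0) * edist (cantorCoding x) (cantorCoding y) ^ ((logb 3 2).toNNReal : ℝ) := by
  rw [edist_dist, edist_dist, Real.coe_toNNReal _ logb_three_two_pos.le,
    ENNReal.ofReal_rpow_of_nonneg dist_nonneg logb_three_two_pos.le, ENNReal.coe_ofNat,
    ← ENNReal.ofReal_ofNat, ← ENNReal.ofReal_mul zero_le_two]
  exact ENNReal.ofReal_le_ofReal (abs_binaryCoding_sub_le_rpow x y)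

theorem logb_le_dimH_cantorSet : ENNReal.ofReal (logb 3 2) ≤ dimH cantorSet := by
  have hd : 0 < (logb 3 2).toNNReal := Real.toNNReal_pos.2 logb_three_two_pos
  have h := dimH_range_le_of_edist_le hd edist_binaryCoding_le
  rw [range_binaryCoding, range_cantorCoding,
    Real.dimH_of_nonempty_interior (by simp [interior_Icc]), Module.finrank_self, Nat.cast_one,
    ENNReal.le_div_iff_mul_le (.inl (ENNReal.coe_ne_zero.2 hd.ne')) (.inl ENNReal.coe_ne_top),
    one_mul] at h
  exact h

theorem stmt_10 : dimH cantorSet = ENNReal.ofReal (Real.log 2 / Real.log 3) := by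
  rw [log_div_log]
  exact le_antisymm dimH_cantorSet_le_logb logb_le_dimH_cantorSet
end

section
/- Let A ⊆ [0,1] be the set of binary expansions with alternating zero-blocks and free blocks both of lengths 1, 2, 4, ..., 2^n, .... Then the Hausdorff dimension of A equals 1/3. -/
/-- Start position of the `n`-th zero-block, when the zero-blocks and free blocks
both have lengths `L 0, L 1, L 2, ...` and alternate (zeros first). -/
def blockStart (L : ℕ → ℕ) : ℕ → ℕ
  | 0 => 0
  | n + 1 => blockStart L n + 2 * L n

/-- `k` is a position (0-indexed, counting binary digits after the point) lying in
one of the zero-blocks. -/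
def zeroPos (L : ℕ → ℕ) (k : ℕ) : Prop :=
  ∃ n, blockStart L n ≤ k ∧ k < blockStart L n + L n

/-- The set of reals in `[0,1]` whose binary expansion vanishes on the zero-blocks
determined by `L` and is arbitrary in `{0,1}` on the alternating free blocks. -/
noncomputable def genSet (L : ℕ → ℕ) : Set ℝ :=
  { x : ℝ | ∃ d : ℕ → Bool, (∀ k, zeroPos L k → d k = false) ∧
      x = ∑' k : ℕ, if d k then ((2 : ℝ)⁻¹) ^ (k + 1) else 0 }


/-!
Below the end `3 * 2 ^ n - 2` of the `n`-th zero-block there are exactly `2 ^ n - 1` free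
positions, so `A` is covered by `2 ^ (2 ^ n - 1)` sets of diameter `2 ^ (-(3 * 2 ^ n - 2))`; this
keeps `μH[1/3] A` finite. Conversely, the map reading off the free digits sends `A` onto `[0, 1]`
and is `1/3`-Hölder. Binary carries are the only obstruction: if two points of `A` first differ
at a free position `k` and their digits then follow the pattern `10…0` / `01…1` up to position
`m`, the points are at least `2 ^ (-(m + 1))` apart, their images at most `2 * 2 ^ (-J)`, where
`J` counts the free positions below `m`, and `m ≤ 3 * J + 1` for every `m`.
-/

open Finset Filter Real Topology
open scoped ENNReal NNReal

local notation "L₂" => fun n : ℕ => 2 ^ n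

section Blocks

variable (L : ℕ → ℕ)

def IsFreePos (k : ℕ) : Prop := ¬ zeroPos L k

open Classical in
noncomputable def freeCount (m : ℕ) : ℕ := Nat.count (IsFreePos L) m

noncomputable def freePos (i : ℕ) : ℕ := Nat.nth (IsFreePos L) i

variable {L}

lemma blockStart_succ (n : ℕ) : blockStart L (n + 1) = blockStart L n + L n + L n := by
  simp only [blockStart]; omega

lemma monotone_blockStart : Monotone (blockStart L) :=
  monotone_nat_of_le_succ fun n => by rw [blockStart_succ]; omega

lemma monotone_blockStart_add : Monotone fun n => blockStart L n + L n :=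
  monotone_nat_of_le_succ fun n => by simp only [blockStart_succ]; omega

lemma isFreePos_of_mem_freeBlock {n k : ℕ} (h₁ : blockStart L n + L n ≤ k)
    (h₂ : k < blockStart L (n + 1)) : IsFreePos L k := by
  rintro ⟨j, hj₁, hj₂⟩
  rcases le_or_gt j n with hjn | hnj
  · have : blockStart L j + L j ≤ blockStart L n + L n := monotone_blockStart_add hjn
    omega
  · have : blockStart L (n + 1) ≤ blockStart L j := monotone_blockStart hnj
    omega

lemma freeCount_add_of_zeroPos {a t : ℕ} (h : ∀ k < t, zeroPos L (a + k)) :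
    freeCount L (a + t) = freeCount L a := by
  classical
  unfold freeCount
  rw [Nat.count_add, Nat.count_of_forall_not (p := fun k => IsFreePos L (a + k))
    fun k hk => not_not.2 (h k hk), add_zero]

lemma freeCount_add_of_isFreePos {a t : ℕ} (h : ∀ k < t, IsFreePos L (a + k)) :
    freeCount L (a + t) = freeCount L a + t := by
  classical
  unfold freeCount
  rw [Nat.count_add, Nat.count_of_forall h]

lemma freeCount_blockStart_add_of_le (n : ℕ) {t : ℕ} (ht : t ≤ L n) :
    freeCount L (blockStart L n + t) = freeCount L (blockStart L n) :=
  freeCount_add_of_zeroPos fun k hk => ⟨n, by omega, by omega⟩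

lemma freeCount_blockStart_add_add_of_le (n : ℕ) {t : ℕ} (ht : t ≤ L n) :
    freeCount L (blockStart L n + L n + t) = freeCount L (blockStart L n) + t := by
  rw [freeCount_add_of_isFreePos fun k hk => isFreePos_of_mem_freeBlock (n := n) (by omega)
    (by rw [blockStart_succ]; omega), freeCount_blockStart_add_of_le n le_rfl]

lemma two_mul_freeCount_blockStart (n : ℕ) :
    2 * freeCount L (blockStart L n) = blockStart L n := by
  induction n with
  | zero => simp [blockStart, freeCount]
  | succ n ih =>
    have := freeCount_blockStart_add_add_of_le n (le_refl (L n))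
    rw [blockStart_succ]
    omega

lemma exists_mem_block (hL : ∀ n, 0 < L n) (m : ℕ) :
    ∃ n, blockStart L n ≤ m ∧ m < blockStart L (n + 1) := by
  induction m with
  | zero => exact ⟨0, le_rfl, by simp [blockStart, hL 0]⟩
  | succ m ih =>
    obtain ⟨n, h₁, h₂⟩ := ih
    rcases (Nat.succ_le_of_lt h₂).lt_or_eq with h | h
    · exact ⟨n, by omega, h⟩
    · exact ⟨n + 1, h.ge, by have := hL (n + 1); rw [blockStart_succ]; omega⟩

lemma exists_zeroPos_gt (hL : ∀ n, 0 < L n) (k : ℕ) : ∃ z, k < z ∧ zeroPos L z := by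
  obtain ⟨n, -, hn⟩ := exists_mem_block hL k
  exact ⟨blockStart L (n + 1), hn, n + 1, le_rfl, by simpa using hL (n + 1)⟩

lemma infinite_isFreePos (hL : ∀ n, 0 < L n) : (Set.ofPred (IsFreePos L)).Infinite := by
  refine Set.infinite_of_forall_exists_gt fun k => ?_
  obtain ⟨n, -, hn⟩ := exists_mem_block hL k
  refine ⟨blockStart L (n + 1) + L (n + 1), isFreePos_of_mem_freeBlock le_rfl ?_, by omega⟩
  have := hL (n + 1)
  rw [blockStart_succ (n + 1)]
  omega

end Blocks

section DoublingBlocks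

lemma blockStart_two_pow_add_two (n : ℕ) :
    blockStart L₂ n + 2 = 2 ^ (n + 1) := by
  induction n with
  | zero => rfl
  | succ n ih => rw [blockStart_succ, pow_succ 2 (n + 1)]; omega

lemma freeCount_two_pow_blockStart_add_one (n : ℕ) :
    freeCount L₂ (blockStart L₂ n) + 1 = 2 ^ n := by
  have := two_mul_freeCount_blockStart (L := L₂) n
  have := blockStart_two_pow_add_two n
  rw [pow_succ] at this
  omega

lemma le_three_mul_freeCount_two_pow_add_one (m : ℕ) :
    m ≤ 3 * freeCount L₂ m + 1 := by
  obtain ⟨n, h₁, h₂⟩ := exists_mem_block (L := L₂) (fun n => Nat.two_pow_pos n) m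
  have hs := freeCount_two_pow_blockStart_add_one n
  have hb := two_mul_freeCount_blockStart (L := L₂) n
  rw [blockStart_succ] at h₂
  obtain ⟨t, rfl⟩ := Nat.exists_eq_add_of_le h₁
  rcases le_or_gt t (2 ^ n) with ht | ht
  · rw [freeCount_blockStart_add_of_le (L := L₂) n ht]
    omega
  · obtain ⟨u, rfl⟩ := Nat.exists_eq_add_of_le ht.le
    rw [← add_assoc, freeCount_blockStart_add_add_of_le (L := L₂) n (by omega)]
    omega

lemma three_mul_freeCount_two_pow_add_one (n : ℕ) :
    3 * freeCount L₂ (blockStart L₂ n + 2 ^ n) + 1 = blockStart L₂ n + 2 ^ n := by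
  have := freeCount_blockStart_add_of_le (L := L₂) n le_rfl
  have := freeCount_two_pow_blockStart_add_one n
  have := two_mul_freeCount_blockStart (L := L₂) n
  omega

end DoublingBlocks

section CarryPattern

/-- `a = w 1 0 ⋯ 0 ⋯` and `a' = w 0 1 ⋯ 1 ⋯`, where `w` has length `k` and the blocks `0 ⋯ 0`,
`1 ⋯ 1` fill the positions strictly between `k` and `m`. -/
def IsCarryPattern (a a' : ℕ → Fin 2) (k m : ℕ) : Prop :=
  (∀ j < k, a j = a' j) ∧ a k = 1 ∧ a' k = 0 ∧ ∀ j, k < j → j < m → a j = 0 ∧ a' j = 1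

variable {a a' : ℕ → Fin 2} {k m : ℕ}

lemma exists_isCarryPattern_of_ne (h : a ≠ a') :
    ∃ k, IsCarryPattern a a' k (k + 1) ∨ IsCarryPattern a' a k (k + 1) := by
  classical
  have hex : ∃ i, a i ≠ a' i := Function.ne_iff.1 h
  have hpre (j) (hj : j < Nat.find hex) : a j = a' j := not_not.1 (Nat.find_min hex hj)
  have hne := Nat.find_spec hex
  refine ⟨Nat.find hex, ?_⟩
  by_cases ha : a (Nat.find hex) = 1
  · exact .inl ⟨hpre, ha, by omega, fun j h₁ h₂ => by omega⟩
  · exact .inr ⟨fun j hj => (hpre j hj).symm, by omega, by omega, fun j h₁ h₂ => by omega⟩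

lemma IsCarryPattern.exists_extend (h : IsCarryPattern a a' k (k + 1)) {z : ℕ} (hkz : k < z)
    (hz : a' z = 0) : ∃ m, k < m ∧ IsCarryPattern a a' k m ∧ (a m = 1 ∨ a' m = 0) := by
  classical
  have hex : ∃ j, k < j ∧ (a j = 1 ∨ a' j = 0) := ⟨z, hkz, .inr hz⟩
  obtain ⟨hkm, hm⟩ := Nat.find_spec hex
  refine ⟨Nat.find hex, hkm, ⟨h.1, h.2.1, h.2.2.1, fun j hkj hjm => ?_⟩, hm⟩
  have := Nat.find_min hex hjm
  omega

lemma IsCarryPattern.sum_sub_sum (h : IsCarryPattern a a' k m) (hkm : k < m) :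
    ∑ i ∈ range m, ofDigitsTerm a i - ∑ i ∈ range m, ofDigitsTerm a' i = ((2 : ℝ) ^ m)⁻¹ := by
  obtain ⟨hpre, hk, hk', hmid⟩ := h
  induction m, hkm using Nat.le_induction with
  | base =>
    have hw : ∑ i ∈ range k, ofDigitsTerm a i = ∑ i ∈ range k, ofDigitsTerm a' i :=
      sum_congr rfl fun i hi => by simp only [ofDigitsTerm, hpre i (mem_range.1 hi)]
    rw [sum_range_succ, sum_range_succ, hw]
    simp [ofDigitsTerm, hk, hk']
  | succ m hm ih =>
    obtain ⟨h₀, h₁⟩ := hmid m hm (by omega)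
    have := ih fun j hj hjm => hmid j hj (by omega)
    rw [sum_range_succ, sum_range_succ]
    simp only [ofDigitsTerm, h₀, h₁, Fin.isValue, Fin.val_zero, Fin.val_one, Nat.cast_zero,
      Nat.cast_one, Nat.cast_ofNat, zero_mul, one_mul, pow_succ, mul_inv] at this ⊢
    linarith

lemma IsCarryPattern.ofDigits_sub_eq (h : IsCarryPattern a a' k m) (hkm : k < m) :
    ofDigits a - ofDigits a' =
      ((2 : ℝ) ^ m)⁻¹ * (1 + ofDigits (fun i => a (i + m)) - ofDigits (fun i => a' (i + m))) := by
  rw [ofDigits_eq_sum_add_ofDigits a m, ofDigits_eq_sum_add_ofDigits a' m]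
  have := h.sum_sub_sum hkm
  simp only [Nat.cast_ofNat]
  linear_combination this

lemma IsCarryPattern.dist_ofDigits_le (h : IsCarryPattern a a' k m) (hkm : k < m) :
    dist (ofDigits a) (ofDigits a') ≤ 2 * ((2 : ℝ) ^ m)⁻¹ := by
  rw [dist_eq, h.ofDigits_sub_eq hkm, abs_mul, abs_of_pos (by positivity), mul_comm 2]
  gcongr
  have := ofDigits_nonneg fun i => a (i + m)
  have := ofDigits_le_one fun i => a (i + m)
  have := ofDigits_nonneg fun i => a' (i + m)
  have := ofDigits_le_one fun i => a' (i + m)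
  rw [abs_le]
  constructor <;> linarith

lemma inv_two_le_ofDigits {a : ℕ → Fin 2} (h : a 0 = 1) : 2⁻¹ ≤ ofDigits a := by
  rw [ofDigits_eq_sum_add_ofDigits a 1]
  have := ofDigits_nonneg fun i => a (i + 1)
  simp only [range_one, sum_singleton, ofDigitsTerm, h]
  norm_num
  positivity

lemma ofDigits_le_inv_two {a : ℕ → Fin 2} (h : a 0 = 0) : ofDigits a ≤ 2⁻¹ := by
  rw [ofDigits_eq_sum_add_ofDigits a 1]
  have := ofDigits_le_one fun i => a (i + 1)
  simp only [range_one, sum_singleton, ofDigitsTerm, h]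
  norm_num
  linarith

lemma IsCarryPattern.inv_two_pow_le_ofDigits_sub (h : IsCarryPattern a a' k m) (hkm : k < m)
    (hm : a m = 1 ∨ a' m = 0) : ((2 : ℝ) ^ (m + 1))⁻¹ ≤ ofDigits a - ofDigits a' := by
  rw [h.ofDigits_sub_eq hkm, pow_succ, mul_inv]
  gcongr
  rcases hm with hm | hm
  · have := inv_two_le_ofDigits (a := fun i => a (i + m)) (by simpa using hm)
    have := ofDigits_le_one fun i => a' (i + m)
    linarith
  · have := ofDigits_nonneg fun i => a (i + m)
    have := ofDigits_le_inv_two (a := fun i => a' (i + m)) (by simpa using hm)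
    linarith

end CarryPattern

section Spread

variable {L : ℕ → ℕ}

lemma isFreePos_freePos (hL : ∀ n, 0 < L n) (i : ℕ) : IsFreePos L (freePos L i) :=
  Nat.nth_mem_of_infinite (infinite_isFreePos hL) i

lemma strictMono_freePos (hL : ∀ n, 0 < L n) : StrictMono (freePos L) :=
  Nat.nth_strictMono (infinite_isFreePos hL)

lemma freeCount_freePos (hL : ∀ n, 0 < L n) (i : ℕ) : freeCount L (freePos L i) = i := by
  classical exact Nat.count_nth_of_infinite (infinite_isFreePos hL) i

lemma freePos_freeCount {k : ℕ} (hk : IsFreePos L k) : freePos L (freeCount L k) = k := by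
  classical exact Nat.nth_count hk

lemma freePos_lt_of_lt_freeCount {i m : ℕ} (h : i < freeCount L m) : freePos L i < m := by
  classical exact Nat.nth_lt_of_lt_count h

lemma freeCount_lt_freeCount {k m : ℕ} (hk : IsFreePos L k) (hkm : k < m) :
    freeCount L k < freeCount L m := by
  classical exact Nat.count_strict_mono hk hkm

variable (L) in
open Classical in
noncomputable def spread (c : ℕ → Fin 2) (k : ℕ) : Fin 2 :=
  if zeroPos L k then 0 else c (freeCount L k)

variable {c c' : ℕ → Fin 2}

lemma spread_of_zeroPos {k : ℕ} (hk : zeroPos L k) : spread L c k = 0 := if_pos hk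

lemma spread_of_isFreePos {k : ℕ} (hk : IsFreePos L k) : spread L c k = c (freeCount L k) :=
  if_neg hk

lemma spread_freePos (hL : ∀ n, 0 < L n) (i : ℕ) : spread L c (freePos L i) = c i := by
  rw [spread_of_isFreePos (isFreePos_freePos hL i), freeCount_freePos hL]

lemma spread_eq_spread_of_lt {N : ℕ} (h : ∀ i < freeCount L N, c i = c' i) {k : ℕ} (hk : k < N) :
    spread L c k = spread L c' k := by
  by_cases hz : zeroPos L k
  · rw [spread_of_zeroPos hz, spread_of_zeroPos hz]
  · rw [spread_of_isFreePos hz, spread_of_isFreePos hz, h _ (freeCount_lt_freeCount hz hk)]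

lemma IsCarryPattern.to_spread (hL : ∀ n, 0 < L n) {i : ℕ} (h : IsCarryPattern c c' i (i + 1)) :
    IsCarryPattern (spread L c) (spread L c') (freePos L i) (freePos L i + 1) := by
  refine ⟨fun j hj => spread_eq_spread_of_lt ?_ hj, ?_, ?_, fun j h₁ h₂ => by omega⟩
  · rw [freeCount_freePos hL]
    exact h.1
  · rw [spread_freePos hL, h.2.1]
  · rw [spread_freePos hL, h.2.2.1]

lemma IsCarryPattern.of_spread (hL : ∀ n, 0 < L n) {i m : ℕ}
    (h : IsCarryPattern (spread L c) (spread L c') (freePos L i) m) :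
    IsCarryPattern c c' i (freeCount L m) := by
  have hmono := strictMono_freePos hL
  refine ⟨fun j hj => ?_, ?_, ?_, fun j h₁ h₂ => ?_⟩
  · simpa only [spread_freePos hL] using h.1 _ (hmono hj)
  · simpa only [spread_freePos hL] using h.2.1
  · simpa only [spread_freePos hL] using h.2.2.1
  · simpa only [spread_freePos hL] using h.2.2.2 _ (hmono h₁) (freePos_lt_of_lt_freeCount h₂)

lemma ofDigits_two_eq_tsum (a : ℕ → Fin 2) :
    ofDigits a = ∑' k, if a k = 1 then (2⁻¹ : ℝ) ^ (k + 1) else 0 := by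
  refine tsum_congr fun k => ?_
  rcases Fin.exists_fin_two.1 ⟨a k, rfl⟩ with h | h <;> simp [ofDigitsTerm, h]

lemma genSet_eq_range_spread : genSet L = Set.range fun c => ofDigits (spread L c) := by
  ext x
  constructor
  · rintro ⟨d, hd, rfl⟩
    refine ⟨fun i => if d (freePos L i) then 1 else 0, ?_⟩
    dsimp only
    rw [ofDigits_two_eq_tsum]
    refine tsum_congr fun k => ?_
    by_cases hk : zeroPos L k
    · simp [spread_of_zeroPos hk, hd k hk]
    · rw [spread_of_isFreePos hk, freePos_freeCount hk]
      cases d k <;> simp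
  · rintro ⟨c, rfl⟩
    exact ⟨fun k => spread L c k = 1, fun k hk => by simp [spread_of_zeroPos hk],
      by simp [ofDigits_two_eq_tsum]⟩

end Spread

section Holder

lemma IsCarryPattern.dist_ofDigits_le_dist_ofDigits_spread_rpow {c c' : ℕ → Fin 2} {i : ℕ}
    (h : IsCarryPattern c c' i (i + 1)) :
    dist (ofDigits c) (ofDigits c') ≤
      4 * dist (ofDigits (spread L₂ c)) (ofDigits (spread L₂ c')) ^ (3⁻¹ : ℝ) := by
  have hL : ∀ n, 0 < (L₂) n := fun n => Nat.two_pow_pos n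
  obtain ⟨z, hkz, hz⟩ := exists_zeroPos_gt hL (freePos L₂ i)
  obtain ⟨m, hkm, hpat, hm⟩ := (h.to_spread hL).exists_extend hkz (spread_of_zeroPos hz)
  set J := freeCount L₂ m
  have htarget : dist (ofDigits c) (ofDigits c') ≤ 2 * ((2 : ℝ) ^ J)⁻¹ := by
    refine (hpat.of_spread hL).dist_ofDigits_le ?_
    rw [← freeCount_freePos hL i]
    exact freeCount_lt_freeCount (isFreePos_freePos hL i) hkm
  have hsource : (((2 : ℝ) ^ (J + 1))⁻¹) ^ 3 ≤
      dist (ofDigits (spread L₂ c)) (ofDigits (spread L₂ c')) := by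
    calc (((2 : ℝ) ^ (J + 1))⁻¹) ^ 3 = ((2 : ℝ) ^ (3 * J + 3))⁻¹ := by ring
      _ ≤ ((2 : ℝ) ^ (m + 1))⁻¹ := inv_pow_le_inv_pow_of_le one_le_two
        (by have := le_three_mul_freeCount_two_pow_add_one m; omega)
      _ ≤ _ := (hpat.inv_two_pow_le_ofDigits_sub hkm hm).trans (le_abs_self _)
  have hroot : ((2 : ℝ) ^ (J + 1))⁻¹ ≤
      dist (ofDigits (spread L₂ c)) (ofDigits (spread L₂ c')) ^ (3⁻¹ : ℝ) := by
    rw [← pow_rpow_inv_natCast (by positivity : (0 : ℝ) ≤ ((2 : ℝ) ^ (J + 1))⁻¹) three_ne_zero]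
    exact rpow_le_rpow (by positivity) hsource (by norm_num)
  rw [pow_succ, mul_inv] at hroot
  linarith

lemma dist_ofDigits_le_dist_ofDigits_spread_rpow (c c' : ℕ → Fin 2) :
    dist (ofDigits c) (ofDigits c') ≤
      4 * dist (ofDigits (spread L₂ c)) (ofDigits (spread L₂ c')) ^ (3⁻¹ : ℝ) := by
  rcases eq_or_ne c c' with rfl | hne
  · simp only [dist_self]
    positivity
  obtain ⟨i, h | h⟩ := exists_isCarryPattern_of_ne hne
  · exact h.dist_ofDigits_le_dist_ofDigits_spread_rpow
  · rw [dist_comm, dist_comm (ofDigits (spread L₂ c))]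
    exact h.dist_ofDigits_le_dist_ofDigits_spread_rpow

lemma HolderOnWith.of_dist_le {X Y : Type*} [PseudoMetricSpace X] [PseudoMetricSpace Y]
    {C r : ℝ≥0} {f : X → Y} {s : Set X}
    (h : ∀ x ∈ s, ∀ y ∈ s, dist (f x) (f y) ≤ C * dist x y ^ (r : ℝ)) : HolderOnWith C r f s := by
  intro x hx y hy
  rw [edist_dist, edist_dist, ENNReal.ofReal_rpow_of_nonneg dist_nonneg r.coe_nonneg,
    ← ENNReal.ofReal_coe_nnreal, ← ENNReal.ofReal_mul C.coe_nonneg]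
  exact ENNReal.ofReal_le_ofReal (h x hx y hy)

lemma le_dimH_range_spread_two_pow :
    ((3⁻¹ : ℝ≥0) : ℝ≥0∞) ≤ dimH (Set.range fun c => ofDigits (spread L₂ c)) := by
  set f := Function.extend (fun c => ofDigits (spread L₂ c)) ofDigits 0
  have hfac : Function.FactorsThrough ofDigits fun c => ofDigits (spread L₂ c) := fun c c' h =>
    dist_le_zero.1 <| by
      simpa [h, zero_rpow (by norm_num : (3⁻¹ : ℝ) ≠ 0)] using
        dist_ofDigits_le_dist_ofDigits_spread_rpow c c'
  have hfc (c : ℕ → Fin 2) : f (ofDigits (spread L₂ c)) = ofDigits c := hfac.extend_apply _ c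
  have hf : HolderOnWith 4 3⁻¹ f (Set.range fun c => ofDigits (spread L₂ c)) := by
    refine .of_dist_le ?_
    rintro _ ⟨c, rfl⟩ _ ⟨c', rfl⟩
    dsimp only
    rw [hfc, hfc]
    simpa using dist_ofDigits_le_dist_ofDigits_spread_rpow c c'
  have hIcc : Set.Icc (0 : ℝ) 1 ⊆ f '' Set.range fun c => ofDigits (spread L₂ c) := by
    intro y hy
    obtain ⟨c, -, rfl⟩ := ofDigits_SurjOn one_lt_two hy
    exact ⟨_, ⟨c, rfl⟩, hfc c⟩
  have h1 : (1 : ℝ≥0∞) ≤ dimH (Set.range fun c => ofDigits (spread L₂ c)) / (3⁻¹ : ℝ≥0) := by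
    calc (1 : ℝ≥0∞) = dimH (Set.Icc (0 : ℝ) 1) := by
          rw [Real.dimH_of_nonempty_interior (by simp), Module.finrank_self, Nat.cast_one]
      _ ≤ _ := (dimH_mono hIcc).trans (hf.dimH_image_le (by norm_num))
  rwa [ENNReal.le_div_iff_mul_le (by simp) (by simp), one_mul] at h1

end Holder

section UpperBound

open MeasureTheory

lemma hausdorffMeasure_le_of_forall_cover {X : Type*} [EMetricSpace X] [MeasurableSpace X]
    [BorelSpace X] {ι : ℕ → Type*} [∀ n, Fintype (ι n)] {d : ℝ} (hd : 0 ≤ d) {s : Set X}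
    {r : ℕ → ℝ≥0∞} (hr : Tendsto r atTop (𝓝 0)) {t : ∀ n, ι n → Set X}
    (ht : ∀ n i, Metric.ediam (t n i) ≤ r n) (hs : ∀ n, s ⊆ ⋃ i, t n i) {C : ℝ≥0∞}
    (hC : ∀ n, Fintype.card (ι n) * r n ^ d ≤ C) : μH[d] s ≤ C := by
  refine (Measure.hausdorffMeasure_le_liminf_sum d s r hr t (.of_forall ht) (.of_forall hs)).trans
    (liminf_le_of_frequently_le' (.of_forall fun n => ?_))
  calc ∑ i, Metric.ediam (t n i) ^ d ≤ ∑ _i : ι n, r n ^ d :=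
        sum_le_sum fun i _ => ENNReal.rpow_le_rpow (ht n i) hd
    _ ≤ C := by simpa using hC n

variable {L : ℕ → ℕ}

lemma ediam_image_spread_le {N : ℕ} {s : Set (ℕ → Fin 2)}
    (hs : ∀ c ∈ s, ∀ c' ∈ s, ∀ i < freeCount L N, c i = c' i) :
    Metric.ediam ((fun c => ofDigits (spread L c)) '' s) ≤ 2⁻¹ ^ N := by
  refine Metric.ediam_le ?_
  rintro _ ⟨c, hc, rfl⟩ _ ⟨c', hc', rfl⟩
  have := abs_ofDigits_sub_ofDigits_le fun k hk => spread_eq_spread_of_lt (hs c hc c' hc') hk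
  rw [← ENNReal.inv_pow, ← ENNReal.ofReal_ofNat 2, ← ENNReal.ofReal_pow zero_le_two,
    ← ENNReal.ofReal_inv_of_pos (by positivity), edist_le_ofReal (by positivity)]
  simpa [Real.dist_eq] using this

lemma two_pow_mul_inv_two_pow_rpow_le_one {F N : ℕ} (h : 3 * F ≤ N) :
    (2 : ℝ≥0∞) ^ F * (2⁻¹ ^ N) ^ (3⁻¹ : ℝ) ≤ 1 := by
  have hle : (2⁻¹ : ℝ≥0∞) ^ N ≤ (2⁻¹ ^ F) ^ 3 := by
    rw [← pow_mul, mul_comm]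
    exact pow_le_pow_right_of_le_one' (by norm_num) h
  have hroot : (((2⁻¹ : ℝ≥0∞) ^ F) ^ 3) ^ (3⁻¹ : ℝ) = 2⁻¹ ^ F := by
    simpa using ENNReal.pow_rpow_inv_natCast three_ne_zero ((2⁻¹ : ℝ≥0∞) ^ F)
  calc (2 : ℝ≥0∞) ^ F * (2⁻¹ ^ N) ^ (3⁻¹ : ℝ) ≤ 2 ^ F * ((2⁻¹ ^ F) ^ 3) ^ (3⁻¹ : ℝ) := by
        gcongr
    _ = 1 := by
        rw [hroot, ← mul_pow, ENNReal.mul_inv_cancel two_ne_zero ENNReal.ofNat_ne_top, one_pow]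

lemma dimH_range_spread_two_pow_le :
    dimH (Set.range fun c => ofDigits (spread L₂ c)) ≤ ((3⁻¹ : ℝ≥0) : ℝ≥0∞) := by
  refine dimH_le_of_hausdorffMeasure_ne_top (ne_top_of_le_ne_top ENNReal.one_ne_top ?_)
  set N : ℕ → ℕ := fun n => blockStart L₂ n + 2 ^ n
  have hN (n : ℕ) : 3 * freeCount L₂ (N n) + 1 = N n := three_mul_freeCount_two_pow_add_one n
  refine hausdorffMeasure_le_of_forall_cover (ι := fun n => Fin (freeCount L₂ (N n)) → Fin 2)
    (r := fun n => 2⁻¹ ^ N n) (t := fun n c₀ => (fun c => ofDigits (spread L₂ c)) ''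
      {c | ∀ i : Fin (freeCount L₂ (N n)), c i = c₀ i}) (by positivity) ?_ ?_ ?_ ?_
  · refine (ENNReal.tendsto_pow_atTop_nhds_zero_of_lt_one (by norm_num)).comp
      (tendsto_atTop_mono (fun n => ?_) tendsto_id)
    have := hN n
    have : n < 2 ^ n := Nat.lt_two_pow_self
    show n ≤ blockStart L₂ n + 2 ^ n
    omega
  · intro n c₀
    refine ediam_image_spread_le fun c hc c' hc' i hi => ?_
    rw [hc ⟨i, hi⟩, hc' ⟨i, hi⟩]
  · rintro n _ ⟨c, rfl⟩
    exact Set.mem_iUnion.2 ⟨fun i => c i, c, fun i => rfl, rfl⟩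
  · intro n
    simpa using two_pow_mul_inv_two_pow_rpow_le_one (by have := hN n; omega)

end UpperBound

theorem stmt_18 : dimH (genSet (fun n => 2 ^ n)) = ENNReal.ofReal (1 / 3) := by
  rw [genSet_eq_range_spread, show ENNReal.ofReal (1 / 3) = ((3⁻¹ : ℝ≥0) : ℝ≥0∞) by
    rw [← ENNReal.ofReal_coe_nnreal]; norm_num]
  exact le_antisymm dimH_range_spread_two_pow_le le_dimH_range_spread_two_pow
end
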